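/- If T, S admit A-adjoints, TS = ST, and α ∈ [0,1), then ‖TS‖_{A,α} ≤ sqrt(4α + 1/(1−α)) · ‖T‖_{A,α} ‖S‖_{A,α}. -/

import Mathlib

open scoped ComplexOrder
open ContinuousLinearMap Filter Topology

variable {H : Type*} [NormedAddCommGroup H] [InnerProductSpace ℂ H] [CompleteSpace H]

/-- The A-semi-inner product `⟨x, y⟩_A = ⟨A x, y⟩` (Mathlib convention: conjugate
linear in the first variable). -/
noncomputable def aInner (A : H →L[ℂ] H) (x y : H) : ℂ := inner ℂ (A x) y

/-- The A-seminorm `‖x‖_A = sqrt ⟨x, x⟩_A`. -/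
noncomputable def aNorm (A : H →L[ℂ] H) (x : H) : ℝ := Real.sqrt (aInner A x x).re

/-- `T` is A-bounded. -/
def ABounded (A T : H →L[ℂ] H) : Prop := ∃ c > 0, ∀ x, aNorm A (T x) ≤ c * aNorm A x

/-- The A-operator seminorm. -/
noncomputable def opNormA (A T : H →L[ℂ] H) : ℝ :=
  sSup {r | ∃ x ∈ closure (Set.range A), aNorm A x = 1 ∧ r = aNorm A (T x)}

/-- The A-numerical radius. -/
noncomputable def wA (A T : H →L[ℂ] H) : ℝ :=
  sSup {r | ∃ x, aNorm A x = 1 ∧ r = ‖aInner A (T x) x‖}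

/-- The A-Crawford number. -/
noncomputable def cA (A T : H →L[ℂ] H) : ℝ :=
  sInf {r | ∃ x, aNorm A x = 1 ∧ r = ‖aInner A (T x) x‖}

/-- The `A_α`-seminorm `‖T‖_{A,α}`. -/
noncomputable def alphaNorm (A T : H →L[ℂ] H) (α : ℝ) : ℝ :=
  sSup {r | ∃ x, aNorm A x = 1 ∧
    r = Real.sqrt (α * ‖aInner A (T x) x‖ ^ 2 + (1 - α) * aNorm A (T x) ^ 2)}

/-- `S` is the A-adjoint `T^{♯_A}` of `T`: the solution of `A X = T* A` whose
range lies in the closure of the range of `A`. -/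
def IsAAdjoint (A T S : H →L[ℂ] H) : Prop :=
  A ∘L S = (ContinuousLinearMap.adjoint T) ∘L A ∧ ∀ x, S x ∈ closure (Set.range A)

/-!
Write `N_T = ‖T‖_{A,α}`. On the `A`-unit sphere `N_T²` dominates both `‖⟨T x, x⟩_A‖²` and
`(1 - α) ‖T x‖_A²`, so by homogeneity `w_A(T) ≤ N_T` and `(1 - α) ‖T z‖_A² ≤ N_T² ‖z‖_A²`.
The second bound, applied twice, gives `(1 - α) ‖T S x‖_A² ≤ N_T² N_S² / (1 - α)`; the first,
together with `w_A(T S) ≤ 2 w_A(T) w_A(S)`, gives `‖⟨T S x, x⟩_A‖ ≤ 2 N_T N_S`. Weighting the two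
by `α` and `1 - α` produces the constant `4 α + 1 / (1 - α)`.

The product inequality follows from `4 T S = (T + S)² - (T - S)²` and the power inequality
`w_A(V²) ≤ w_A(V)²`. For the latter, `4 Re ⟨V² z, z⟩_A = ‖(V + V^♯) z‖_A² - ‖(V - V^♯) z‖_A²`, and
`V + V^♯` is `A`-selfadjoint, so its `A`-seminorm is at most its numerical radius `2 w_A(V)`.
Finiteness of `N_T` rests on `‖R x‖_A ≤ ‖R‖ ‖x‖_A` for `A`-selfadjoint `R`, applied to `R = T^♯ T`.
-/

section SemiInner

variable {E : Type*} [NormedAddCommGroup E] [InnerProductSpace ℂ E] {A : E →L[ℂ] E}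

lemma aInner_add_left (x y z : E) : aInner A (x + y) z = aInner A x z + aInner A y z := by
  simp only [aInner, map_add, inner_add_left]

lemma aInner_add_right (x y z : E) : aInner A x (y + z) = aInner A x y + aInner A x z :=
  inner_add_right _ _ _

lemma aInner_sub_left (x y z : E) : aInner A (x - y) z = aInner A x z - aInner A y z := by
  simp only [aInner, map_sub, inner_sub_left]

lemma aInner_sub_right (x y z : E) : aInner A x (y - z) = aInner A x y - aInner A x z :=
  inner_sub_right _ _ _

lemma aInner_smul_left (c : ℂ) (x y : E) :
    aInner A (c • x) y = starRingEnd ℂ c * aInner A x y := by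
  simp only [aInner, map_smul, inner_smul_left]

lemma aInner_smul_right (c : ℂ) (x y : E) : aInner A x (c • y) = c * aInner A x y :=
  inner_smul_right _ _ _

lemma aInner_conj_symm (hA : A.IsPositive) (x y : E) :
    starRingEnd ℂ (aInner A y x) = aInner A x y := by
  rw [aInner, aInner, inner_conj_symm]
  exact (hA.isSymmetric x y).symm

lemma aNorm_nonneg (x : E) : 0 ≤ aNorm A x := Real.sqrt_nonneg _

lemma aNorm_sq (hA : A.IsPositive) (x : E) : aNorm A x ^ 2 = (aInner A x x).re :=
  Real.sq_sqrt (hA.re_inner_nonneg_left x)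

lemma aNorm_smul (c : ℂ) (x : E) : aNorm A (c • x) = ‖c‖ * aNorm A x := by
  rw [aNorm, aInner_smul_left, aInner_smul_right, ← mul_assoc, Complex.conj_mul',
    ← Complex.ofReal_pow, Complex.re_ofReal_mul, Real.sqrt_mul (sq_nonneg _),
    Real.sqrt_sq (norm_nonneg c), aNorm]

lemma norm_aInner_le (hA : A.IsPositive) (x y : E) : ‖aInner A x y‖ ≤ aNorm A x * aNorm A y :=
  let aCore : PreInnerProductSpace.Core ℂ E :=
    { inner := aInner A
      conj_inner_symm x y := aInner_conj_symm hA x y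
      re_inner_nonneg x := hA.re_inner_nonneg_left x
      add_left := aInner_add_left
      smul_left x y c := aInner_smul_left c x y }
  InnerProductSpace.Core.norm_inner_le_norm (c := aCore) x y

lemma norm_aInner_le_of_aNorm_eq_one (hA : A.IsPositive) (y : E) {x : E} (hx : aNorm A x = 1) :
    ‖aInner A y x‖ ≤ aNorm A y := by
  simpa only [hx, mul_one] using norm_aInner_le hA y x

lemma aNorm_le_sqrt_norm_mul_norm (y : E) : aNorm A y ≤ √‖A‖ * ‖y‖ := by
  rw [← Real.sqrt_sq (norm_nonneg y), ← Real.sqrt_mul (norm_nonneg A)]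
  refine Real.sqrt_le_sqrt ((Complex.re_le_norm _).trans ?_)
  calc ‖aInner A y y‖ ≤ ‖A y‖ * ‖y‖ := norm_inner_le_norm _ _
    _ ≤ ‖A‖ * ‖y‖ * ‖y‖ := by gcongr; exact A.le_opNorm y
    _ = ‖A‖ * ‖y‖ ^ 2 := by ring

lemma aNorm_add_sq_add_aNorm_sub_sq (hA : A.IsPositive) (x y : E) :
    aNorm A (x + y) ^ 2 + aNorm A (x - y) ^ 2 = 2 * aNorm A x ^ 2 + 2 * aNorm A y ^ 2 := by
  simp only [aNorm_sq hA, aInner_add_left, aInner_add_right, aInner_sub_left, aInner_sub_right,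
    Complex.add_re, Complex.sub_re]
  ring

end SemiInner

/-- `T'` is *an* `A`-adjoint of `T`, i.e. a solution of `A X = T* A`; unlike `IsAAdjoint`, no range
condition singles out a distinguished solution, so the relation is symmetric. -/
def SolvesAAdjointEq {E : Type*} [NormedAddCommGroup E] [InnerProductSpace ℂ E] [CompleteSpace E]
    (A T T' : E →L[ℂ] E) : Prop :=
  A ∘L T' = adjoint T ∘L A

namespace SolvesAAdjointEq

variable {E : Type*} [NormedAddCommGroup E] [InnerProductSpace ℂ E] [CompleteSpace E]
  {A T T' S S' : E →L[ℂ] E}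

lemma apply (h : SolvesAAdjointEq A T T') (x : E) : A (T' x) = adjoint T (A x) :=
  DFunLike.congr_fun h x

lemma symm (hA : A.IsPositive) (h : SolvesAAdjointEq A T T') : SolvesAAdjointEq A T' T := by
  have := congrArg adjoint h
  simp only [adjoint_comp, adjoint_adjoint, hA.isSelfAdjoint.adjoint_eq] at this
  exact this.symm

lemma aInner_apply_left (hA : A.IsPositive) (h : SolvesAAdjointEq A T T') (x y : E) :
    aInner A (T x) y = aInner A x (T' y) := by
  rw [aInner, aInner, ← adjoint_inner_left T', ← (h.symm hA).apply x]

lemma comp (hT : SolvesAAdjointEq A T T') (hS : SolvesAAdjointEq A S S') :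
    SolvesAAdjointEq A (T ∘L S) (S' ∘L T') := by
  ext x
  simp only [comp_apply, hS.apply, hT.apply, adjoint_comp]

lemma add (hT : SolvesAAdjointEq A T T') (hS : SolvesAAdjointEq A S S') :
    SolvesAAdjointEq A (T + S) (T' + S') := by
  ext x
  simp only [comp_apply, add_apply, map_add, hT.apply, hS.apply]

lemma sub (hT : SolvesAAdjointEq A T T') (hS : SolvesAAdjointEq A S S') :
    SolvesAAdjointEq A (T - S) (T' - S') := by
  ext x
  simp only [comp_apply, sub_apply, map_sub, hT.apply, hS.apply]

lemma smul (h : SolvesAAdjointEq A T T') (c : ℂ) :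
    SolvesAAdjointEq A (c • T) (starRingEnd ℂ c • T') := by
  ext x
  simp only [comp_apply, smul_apply, map_smul, h.apply, ← star_eq_adjoint, star_smul]
  rfl

lemma ofReal_smul (h : SolvesAAdjointEq A T T') (r : ℝ) :
    SolvesAAdjointEq A ((r : ℂ) • T) ((r : ℂ) • T') := by
  simpa only [Complex.conj_ofReal] using h.smul r

lemma pow {R : E →L[ℂ] E} (hR : SolvesAAdjointEq A R R) (n : ℕ) :
    SolvesAAdjointEq A (R ^ n) (R ^ n) := by
  induction n with
  | zero => ext x; simp [← star_eq_adjoint]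
  | succ n ih =>
    have := ih.comp hR
    rwa [← mul_def, ← mul_def, ← pow_succ, ← pow_succ'] at this

lemma aNorm_apply_sq_le (hA : A.IsPositive) (h : SolvesAAdjointEq A T T') (x : E) :
    aNorm A (T x) ^ 2 ≤ aNorm A x * aNorm A (T' (T x)) := by
  rw [aNorm_sq hA, h.aInner_apply_left hA]
  exact (Complex.re_le_norm _).trans (norm_aInner_le hA _ _)

lemma aNorm_apply_eq_zero (hA : A.IsPositive) (h : SolvesAAdjointEq A T T') {x : E}
    (hx : aNorm A x = 0) : aNorm A (T x) = 0 := by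
  have := h.aNorm_apply_sq_le hA x
  rw [hx, zero_mul] at this
  exact pow_eq_zero_iff two_ne_zero |>.1 (le_antisymm this (sq_nonneg _))

end SolvesAAdjointEq

lemma le_of_forall_pow_two_pow_le_mul_pow {a b C : ℝ} (hb : 0 ≤ b)
    (h : ∀ k : ℕ, a ^ 2 ^ k ≤ C * b ^ 2 ^ k) : a ≤ b := by
  by_contra! hba
  rcases hb.eq_or_lt with rfl | hb
  · have := h 0
    norm_num at this
    linarith
  have hab : 1 < a / b := (one_lt_div hb).2 hba
  obtain ⟨n, hn⟩ := pow_unbounded_of_one_lt C hab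
  have h2n : (a / b) ^ 2 ^ n ≤ C := by
    rw [div_pow, div_le_iff₀ (by positivity)]
    exact h n
  linarith [pow_le_pow_right₀ hab.le n.lt_two_pow_self.le]

section Bounded

variable {E : Type*} [NormedAddCommGroup E] [InnerProductSpace ℂ E] [CompleteSpace E]
  {A : E →L[ℂ] E}

/-- Spectral-radius argument: `‖R x‖_A ^ (2 ^ k) ≤ ‖R ^ (2 ^ k) x‖_A ≤ √‖A‖ ‖R‖ ^ (2 ^ k) ‖x‖`. -/
lemma aNorm_apply_le_opNorm_of_solves_self (hA : A.IsPositive) {R : E →L[ℂ] E}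
    (hR : SolvesAAdjointEq A R R) {x : E} (hx : aNorm A x = 1) : aNorm A (R x) ≤ ‖R‖ := by
  have chain (k : ℕ) : aNorm A (R x) ^ 2 ^ k ≤ aNorm A ((R ^ 2 ^ k) x) := by
    induction k with
    | zero => simp
    | succ k ih =>
      calc aNorm A (R x) ^ 2 ^ (k + 1) = (aNorm A (R x) ^ 2 ^ k) ^ 2 := by ring
        _ ≤ aNorm A ((R ^ 2 ^ k) x) ^ 2 := by have := aNorm_nonneg (A := A) (R x); gcongr
        _ ≤ aNorm A x * aNorm A ((R ^ 2 ^ k) ((R ^ 2 ^ k) x)) :=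
          (hR.pow _).aNorm_apply_sq_le hA x
        _ = aNorm A ((R ^ 2 ^ (k + 1)) x) := by rw [hx, one_mul, pow_succ, mul_two, pow_add]; rfl
  refine le_of_forall_pow_two_pow_le_mul_pow (C := √‖A‖ * ‖x‖) (norm_nonneg R) fun k => ?_
  calc aNorm A (R x) ^ 2 ^ k ≤ aNorm A ((R ^ 2 ^ k) x) := chain k
    _ ≤ √‖A‖ * ‖(R ^ 2 ^ k) x‖ := aNorm_le_sqrt_norm_mul_norm _
    _ ≤ √‖A‖ * (‖R‖ ^ 2 ^ k * ‖x‖) := by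
      gcongr
      exact (le_opNorm _ _).trans (by gcongr; exact norm_pow_le' R (by positivity))
    _ = √‖A‖ * ‖x‖ * ‖R‖ ^ 2 ^ k := by ring

lemma SolvesAAdjointEq.aNorm_apply_sq_le_opNorm (hA : A.IsPositive) {T T' : E →L[ℂ] E}
    (h : SolvesAAdjointEq A T T') {x : E} (hx : aNorm A x = 1) :
    aNorm A (T x) ^ 2 ≤ ‖T' ∘L T‖ := by
  calc aNorm A (T x) ^ 2 ≤ aNorm A x * aNorm A ((T' ∘L T) x) := h.aNorm_apply_sq_le hA x
    _ ≤ ‖T' ∘L T‖ := by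
      rw [hx, one_mul]
      exact aNorm_apply_le_opNorm_of_solves_self hA ((h.symm hA).comp h) hx

end Bounded

section Numerical

variable {E : Type*} [NormedAddCommGroup E] [InnerProductSpace ℂ E] {A : E →L[ℂ] E}

lemma aNorm_add_sq_sub_aNorm_sub_sq (hA : A.IsPositive) (x y : E) :
    aNorm A (x + y) ^ 2 - aNorm A (x - y) ^ 2 = 4 * (aInner A x y).re := by
  have hyx : (aInner A y x).re = (aInner A x y).re := by
    rw [← aInner_conj_symm hA x y, Complex.conj_re]
  simp only [aNorm_sq hA, aInner_add_left, aInner_add_right, aInner_sub_left, aInner_sub_right,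
    Complex.add_re, Complex.sub_re]
  linarith

/-- `w_A(T) ≤ M`, stated for all vectors at once by homogeneity. -/
def NumRadiusLE (A T : E →L[ℂ] E) (M : ℝ) : Prop :=
  ∀ z, ‖aInner A (T z) z‖ ≤ M * aNorm A z ^ 2

namespace NumRadiusLE

variable {T S : E →L[ℂ] E} {M N : ℝ}

lemma mono (h : NumRadiusLE A T M) (hMN : M ≤ N) : NumRadiusLE A T N :=
  fun z => (h z).trans (mul_le_mul_of_nonneg_right hMN (sq_nonneg _))

lemma smul (h : NumRadiusLE A T M) (c : ℂ) : NumRadiusLE A (c • T) (‖c‖ * M) := by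
  intro z
  rw [smul_apply, aInner_smul_left, norm_mul, Complex.norm_conj, mul_assoc]
  exact mul_le_mul_of_nonneg_left (h z) (norm_nonneg c)

lemma of_ofReal_smul {r : ℝ} (h : NumRadiusLE A ((r : ℂ) • T) M) (hr : 0 < r) :
    NumRadiusLE A T (M / r) := by
  intro z
  have := h z
  rw [smul_apply, aInner_smul_left, norm_mul, Complex.norm_conj, Complex.norm_real,
    Real.norm_of_nonneg hr.le] at this
  rw [div_mul_eq_mul_div, le_div_iff₀ hr]
  linarith

lemma add (hT : NumRadiusLE A T M) (hS : NumRadiusLE A S N) : NumRadiusLE A (T + S) (M + N) := by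
  intro z
  rw [add_apply, aInner_add_left, add_mul]
  exact (norm_add_le _ _).trans (add_le_add (hT z) (hS z))

lemma sub (hT : NumRadiusLE A T M) (hS : NumRadiusLE A S N) : NumRadiusLE A (T - S) (M + N) := by
  intro z
  rw [sub_apply, aInner_sub_left, add_mul]
  exact (norm_sub_le _ _).trans (add_le_add (hT z) (hS z))

end NumRadiusLE

end Numerical

lemma Complex.exists_norm_eq_one_conj_sq_mul_eq_norm (c : ℂ) :
    ∃ μ : ℂ, ‖μ‖ = 1 ∧ starRingEnd ℂ (μ ^ 2) * c = ‖c‖ := by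
  rcases eq_or_ne c 0 with rfl | hc
  · exact ⟨1, by simp⟩
  have hc' : (‖c‖ : ℂ) ≠ 0 := by exact_mod_cast norm_ne_zero_iff.2 hc
  obtain ⟨μ, hμ⟩ := IsAlgClosed.exists_pow_nat_eq (c / ‖c‖) two_pos
  refine ⟨μ, ?_, ?_⟩
  · have : ‖μ‖ ^ 2 = 1 := by
      rw [← norm_pow, hμ, norm_div, Complex.norm_real, norm_norm, div_self (norm_ne_zero_iff.2 hc)]
    exact (pow_eq_one_iff_of_nonneg (norm_nonneg μ) two_ne_zero).1 this
  · rw [hμ, map_div₀, Complex.conj_ofReal, div_mul_eq_mul_div, Complex.conj_mul',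
      div_eq_iff hc']
    ring

section NumericalAdjoint

variable {E : Type*} [NormedAddCommGroup E] [InnerProductSpace ℂ E] [CompleteSpace E]
  {A : E →L[ℂ] E} {V V' : E →L[ℂ] E} {M : ℝ}

namespace NumRadiusLE

lemma of_solves (hA : A.IsPositive) (hV : SolvesAAdjointEq A V V') (hM : NumRadiusLE A V M) :
    NumRadiusLE A V' M := by
  intro z
  rw [← aInner_conj_symm hA, ← hV.aInner_apply_left hA, Complex.norm_conj]
  exact hM z

lemma aNorm_apply_le_of_solves_self (hA : A.IsPositive) (hV : SolvesAAdjointEq A V V)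
    (hM : NumRadiusLE A V M) (hM0 : 0 ≤ M) (x : E) : aNorm A (V x) ≤ M * aNorm A x := by
  have polarization (u v : E) :
      4 * (aInner A (V u) v).re ≤ 2 * M * (aNorm A u ^ 2 + aNorm A v ^ 2) := by
    have hvu : (aInner A (V v) u).re = (aInner A (V u) v).re := by
      rw [hV.aInner_apply_left hA, ← aInner_conj_symm hA, Complex.conj_re]
    have hplus := (Complex.re_le_norm _).trans (hM (u + v))
    have hminus := ((neg_le_abs _).trans (Complex.abs_re_le_norm _)).trans (hM (u - v))
    have hpar := aNorm_add_sq_add_aNorm_sub_sq hA u v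
    simp only [map_add, map_sub, aInner_add_left, aInner_add_right, aInner_sub_left,
      aInner_sub_right, Complex.add_re, Complex.sub_re] at hplus hminus
    nlinarith
  rcases hM0.eq_or_lt with rfl | hMpos
  · have := polarization x (V x)
    rw [← aNorm_sq hA] at this
    nlinarith [aNorm_nonneg (A := A) (V x)]
  · have := polarization ((M : ℂ) • x) (V x)
    rw [map_smul, aInner_smul_left, Complex.conj_ofReal, Complex.re_ofReal_mul, ← aNorm_sq hA,
      aNorm_smul, Complex.norm_real, Real.norm_of_nonneg hM0] at this
    refine (pow_le_pow_iff_left₀ (aNorm_nonneg _) (mul_nonneg hM0 (aNorm_nonneg _))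
      two_ne_zero).1 ?_
    nlinarith

lemma re_aInner_apply_apply_le (hA : A.IsPositive) (hV : SolvesAAdjointEq A V V')
    (hM : NumRadiusLE A V M) (hM0 : 0 ≤ M) (z : E) :
    (aInner A (V (V z)) z).re ≤ M ^ 2 * aNorm A z ^ 2 := by
  have hP : SolvesAAdjointEq A (V + V') (V + V') := by
    simpa only [add_comm V'] using hV.add (hV.symm hA)
  have hPz : aNorm A (V z + V' z) ≤ 2 * M * aNorm A z := by
    simpa only [two_mul, add_apply] using
      (hM.add (hM.of_solves hA hV)).aNorm_apply_le_of_solves_self hA hP (by positivity) z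
  have hsplit := aNorm_add_sq_sub_aNorm_sub_sq hA (V z) (V' z)
  rw [← hV.aInner_apply_left hA] at hsplit
  nlinarith [aNorm_nonneg (A := A) (V z - V' z), aNorm_nonneg (A := A) (V z + V' z)]

/-- A unimodular rotation of `V` turns the bound on real parts into one on absolute values. -/
lemma comp_self (hA : A.IsPositive) (hV : SolvesAAdjointEq A V V') (hM : NumRadiusLE A V M)
    (hM0 : 0 ≤ M) : NumRadiusLE A (V ∘L V) (M ^ 2) := by
  intro z
  obtain ⟨μ, hμ1, hμ⟩ := Complex.exists_norm_eq_one_conj_sq_mul_eq_norm (aInner A (V (V z)) z)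
  have hμV : NumRadiusLE A (μ • V) M := by simpa only [hμ1, one_mul] using hM.smul μ
  have := hμV.re_aInner_apply_apply_le hA (hV.smul μ) hM0 z
  rwa [smul_apply, smul_apply, map_smul, smul_smul, ← sq, aInner_smul_left, hμ,
    Complex.ofReal_re] at this

end NumRadiusLE

end NumericalAdjoint

section Commuting

variable {E : Type*} [NormedAddCommGroup E] [InnerProductSpace ℂ E] [CompleteSpace E]
  {A T T' S S' : E →L[ℂ] E} {a b : ℝ}

namespace NumRadiusLE

lemma comp_of_commute_add_sq_div_two (hA : A.IsPositive) (hT : SolvesAAdjointEq A T T')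
    (hS : SolvesAAdjointEq A S S') (hcomm : T ∘L S = S ∘L T) (ha : NumRadiusLE A T a)
    (hb : NumRadiusLE A S b) (hab : 0 ≤ a + b) : NumRadiusLE A (T ∘L S) ((a + b) ^ 2 / 2) := by
  intro z
  have hplus := (ha.add hb).comp_self hA (hT.add hS) hab z
  have hminus := (ha.sub hb).comp_self hA (hT.sub hS) hab z
  have hST : S (T z) = T (S z) := (DFunLike.congr_fun hcomm z).symm
  have hsq : ((T + S) ∘L (T + S)) z - ((T - S) ∘L (T - S)) z = (4 : ℂ) • (T ∘L S) z := by
    simp only [comp_apply, add_apply, sub_apply, map_add, map_sub, hST]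
    module
  have h4 : 4 * ‖aInner A ((T ∘L S) z) z‖
      = ‖aInner A (((T + S) ∘L (T + S)) z) z - aInner A (((T - S) ∘L (T - S)) z) z‖ := by
    rw [← aInner_sub_left, hsq, aInner_smul_left, norm_mul, Complex.norm_conj]
    norm_num
  have := h4.trans_le ((norm_sub_le _ _).trans (add_le_add hplus hminus))
  linarith

/-- `b • T` and `a • S` share the bound `a b`, for which `(a + b)² / 2` becomes `2 a b`. -/
lemma comp_of_commute_of_pos (hA : A.IsPositive) (hT : SolvesAAdjointEq A T T')
    (hS : SolvesAAdjointEq A S S') (hcomm : T ∘L S = S ∘L T) (ha : NumRadiusLE A T a)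
    (hb : NumRadiusLE A S b) (ha0 : 0 < a) (hb0 : 0 < b) :
    NumRadiusLE A (T ∘L S) (2 * a * b) := by
  have hbT : NumRadiusLE A ((b : ℂ) • T) (b * a) := by
    simpa only [Complex.norm_real, Real.norm_of_nonneg hb0.le] using ha.smul (b : ℂ)
  have haS : NumRadiusLE A ((a : ℂ) • S) (a * b) := by
    simpa only [Complex.norm_real, Real.norm_of_nonneg ha0.le] using hb.smul (a : ℂ)
  have hscaled := hbT.comp_of_commute_add_sq_div_two hA (hT.ofReal_smul b) (hS.ofReal_smul a)
    (by simp only [smul_comp, comp_smul, smul_smul, hcomm, mul_comm]) haS (by positivity)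
  rw [smul_comp, comp_smul, smul_smul, ← Complex.ofReal_mul] at hscaled
  exact (hscaled.of_ofReal_smul (by positivity)).mono (le_of_eq (by field_simp; ring))

lemma comp_of_commute (hA : A.IsPositive) (hT : SolvesAAdjointEq A T T')
    (hS : SolvesAAdjointEq A S S') (hcomm : T ∘L S = S ∘L T) (ha : NumRadiusLE A T a)
    (hb : NumRadiusLE A S b) (ha0 : 0 ≤ a) (hb0 : 0 ≤ b) :
    NumRadiusLE A (T ∘L S) (2 * a * b) := by
  intro z
  have hlim : Tendsto (fun ε => 2 * (a + ε) * (b + ε) * aNorm A z ^ 2) (𝓝[>] 0)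
      (𝓝 (2 * a * b * aNorm A z ^ 2)) := by
    refine tendsto_nhdsWithin_of_tendsto_nhds (Continuous.tendsto' ?_ _ _ (by ring))
    fun_prop
  refine ge_of_tendsto hlim (eventually_nhdsWithin_of_forall fun ε (hε : 0 < ε) => ?_)
  exact comp_of_commute_of_pos hA hT hS hcomm (ha.mono (le_add_of_nonneg_right hε.le))
    (hb.mono (le_add_of_nonneg_right hε.le)) (by positivity) (by positivity) z

end NumRadiusLE

end Commuting

section AlphaNorm

variable {E : Type*} [NormedAddCommGroup E] [InnerProductSpace ℂ E] {A : E →L[ℂ] E}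

lemma alphaNorm_nonneg (A T : E →L[ℂ] E) (α : ℝ) : 0 ≤ alphaNorm A T α :=
  Real.sSup_nonneg (by rintro _ ⟨x, -, rfl⟩; exact Real.sqrt_nonneg _)

lemma exists_aNorm_eq_one_smul {z : E} (hz : aNorm A z ≠ 0) :
    ∃ (c : ℂ) (x : E), aNorm A x = 1 ∧ z = c • x := by
  refine ⟨aNorm A z, ((aNorm A z)⁻¹ : ℂ) • z, ?_, ?_⟩
  · rw [aNorm_smul, norm_inv, Complex.norm_real, Real.norm_of_nonneg (aNorm_nonneg _),
      inv_mul_cancel₀ hz]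
  · rw [smul_smul, mul_inv_cancel₀ (by exact_mod_cast hz), one_smul]

variable [CompleteSpace E] {T T' : E →L[ℂ] E} {α : ℝ}

namespace SolvesAAdjointEq

lemma le_alphaNorm_sq (hA : A.IsPositive) (h : SolvesAAdjointEq A T T') (hα0 : 0 ≤ α)
    (hα1 : α ≤ 1) {x : E} (hx : aNorm A x = 1) :
    α * ‖aInner A (T x) x‖ ^ 2 + (1 - α) * aNorm A (T x) ^ 2 ≤ alphaNorm A T α ^ 2 := by
  have hle_sq {y : E} (hy : aNorm A y = 1) :
      α * ‖aInner A (T y) y‖ ^ 2 + (1 - α) * aNorm A (T y) ^ 2 ≤ aNorm A (T y) ^ 2 := by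
    have := pow_le_pow_left₀ (norm_nonneg _) (norm_aInner_le_of_aNorm_eq_one hA (T y) hy) 2
    nlinarith
  have hbdd : BddAbove {r | ∃ y, aNorm A y = 1 ∧
      r = √(α * ‖aInner A (T y) y‖ ^ 2 + (1 - α) * aNorm A (T y) ^ 2)} := by
    refine ⟨√‖T' ∘L T‖, ?_⟩
    rintro _ ⟨y, hy, rfl⟩
    exact Real.sqrt_le_sqrt ((hle_sq hy).trans (h.aNorm_apply_sq_le_opNorm hA hy))
  have hsqrt := pow_le_pow_left₀ (Real.sqrt_nonneg _) (le_csSup hbdd ⟨x, hx, rfl⟩) 2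
  rwa [Real.sq_sqrt (by positivity)] at hsqrt

lemma numRadiusLE_alphaNorm (hA : A.IsPositive) (h : SolvesAAdjointEq A T T') (hα0 : 0 ≤ α)
    (hα1 : α ≤ 1) : NumRadiusLE A T (alphaNorm A T α) := by
  intro z
  by_cases hz : aNorm A z = 0
  · simpa [hz] using norm_aInner_le hA (T z) z
  obtain ⟨c, x, hx, rfl⟩ := exists_aNorm_eq_one_smul hz
  have hunit : ‖aInner A (T x) x‖ ≤ alphaNorm A T α := by
    refine (pow_le_pow_iff_left₀ (norm_nonneg _) (alphaNorm_nonneg A T α) two_ne_zero).1 ?_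
    nlinarith [h.le_alphaNorm_sq hA hα0 hα1 hx,
      pow_le_pow_left₀ (norm_nonneg _) (norm_aInner_le_of_aNorm_eq_one hA (T x) hx) 2]
  rw [map_smul, aInner_smul_left, aInner_smul_right, norm_mul, norm_mul, Complex.norm_conj,
    aNorm_smul, hx, mul_one, ← mul_assoc, ← sq, mul_comm]
  exact mul_le_mul_of_nonneg_right hunit (sq_nonneg _)

lemma one_sub_mul_aNorm_apply_sq_le (hA : A.IsPositive) (h : SolvesAAdjointEq A T T')
    (hα0 : 0 ≤ α) (hα1 : α ≤ 1) (z : E) :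
    (1 - α) * aNorm A (T z) ^ 2 ≤ alphaNorm A T α ^ 2 * aNorm A z ^ 2 := by
  by_cases hz : aNorm A z = 0
  · simp [hz, h.aNorm_apply_eq_zero hA hz]
  obtain ⟨c, x, hx, rfl⟩ := exists_aNorm_eq_one_smul hz
  have hunit : (1 - α) * aNorm A (T x) ^ 2 ≤ alphaNorm A T α ^ 2 := by
    nlinarith [h.le_alphaNorm_sq hA hα0 hα1 hx, sq_nonneg ‖aInner A (T x) x‖]
  rw [map_smul, aNorm_smul, aNorm_smul, hx, mul_one]
  nlinarith [sq_nonneg ‖c‖]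

lemma one_sub_mul_aNorm_comp_apply_sq_le (hA : A.IsPositive) {S S' : E →L[ℂ] E}
    (hT : SolvesAAdjointEq A T T') (hS : SolvesAAdjointEq A S S') (hα0 : 0 ≤ α) (hα1 : α < 1)
    {x : E} (hx : aNorm A x = 1) :
    (1 - α) * aNorm A (T (S x)) ^ 2 ≤ (alphaNorm A T α * alphaNorm A S α) ^ 2 / (1 - α) := by
  have hTSx := hT.one_sub_mul_aNorm_apply_sq_le hA hα0 hα1.le (S x)
  have hSx := hS.one_sub_mul_aNorm_apply_sq_le hA hα0 hα1.le x
  rw [hx, one_pow, mul_one] at hSx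
  rw [le_div_iff₀ (sub_pos.2 hα1)]
  nlinarith [mul_le_mul_of_nonneg_left hSx (sq_nonneg (alphaNorm A T α))]

end SolvesAAdjointEq

end AlphaNorm

theorem stmt14 (A T S : H →L[ℂ] H) (hA : A.IsPositive)
    (hT : ∃ T', IsAAdjoint A T T') (hS : ∃ S', IsAAdjoint A S S')
    (hcomm : T ∘L S = S ∘L T) (α : ℝ) (hα : α ∈ Set.Ico (0:ℝ) 1) :
    alphaNorm A (T ∘L S) α ≤
      Real.sqrt (4 * α + 1 / (1 - α)) * (alphaNorm A T α * alphaNorm A S α) := by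
  obtain ⟨T', hT : SolvesAAdjointEq A T T', -⟩ := hT
  obtain ⟨S', hS : SolvesAAdjointEq A S S', -⟩ := hS
  obtain ⟨hα0, hα1⟩ := hα
  set a := alphaNorm A T α
  set b := alphaNorm A S α
  have ha : 0 ≤ a := alphaNorm_nonneg A T α
  have hb : 0 ≤ b := alphaNorm_nonneg A S α
  refine Real.sSup_le ?_ (by positivity)
  rintro _ ⟨x, hx, rfl⟩
  rw [comp_apply]
  have hw : ‖aInner A (T (S x)) x‖ ≤ 2 * a * b := by
    simpa only [hx, one_pow, mul_one, comp_apply] using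
      (hT.numRadiusLE_alphaNorm hA hα0 hα1.le).comp_of_commute hA hT hS hcomm
        (hS.numRadiusLE_alphaNorm hA hα0 hα1.le) ha hb x
  have hnum : ‖aInner A (T (S x)) x‖ ^ 2 ≤ (2 * a * b) ^ 2 :=
    pow_le_pow_left₀ (norm_nonneg _) hw 2
  have hsemi := hT.one_sub_mul_aNorm_comp_apply_sq_le hA hS hα0 hα1 hx
  rw [← Real.sqrt_sq (mul_nonneg ha hb), ← Real.sqrt_mul (by positivity)]
  refine Real.sqrt_le_sqrt ?_
  calc α * ‖aInner A (T (S x)) x‖ ^ 2 + (1 - α) * aNorm A (T (S x)) ^ 2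
      ≤ α * (2 * a * b) ^ 2 + (a * b) ^ 2 / (1 - α) := by gcongr
    _ = (4 * α + 1 / (1 - α)) * (a * b) ^ 2 := by ring
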